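/- For every NCM M there exist an NPCM M' whose pushdown makes zero reversals (it never pops) and a fixed word f Z0, where f is a state of M' and Z0 is the bottom-of-stack marker, such that the left quotient (f Z0)^{-1} S(M') equals L(M). -/

import Mathlib

/-!
Common formalization of reversal-bounded counter machines (NCM/DCM), pushdown
machines augmented with reversal-bounded counters (NPCM), `r`-flip NPCMs,
machines with one unrestricted counter plus reversal-bounded counters (NCACM),
stack automata (NSA), two-tape NCMs, multi-head NFAs, generalized sequential
machines (gsm), store languages/configurations, reachability (`pre*`/`post*`),
regular languages, Parikh maps, semilinearity, and trios.
-/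

namespace StoreFormal

/-- Regular languages: accepted by a DFA with finitely many states. -/
def IsRegularLang {α : Type} (L : Set (List α)) : Prop :=
  ∃ (σ : Type) (_ : Fintype σ) (M : DFA α σ), M.accepts = L

/-- One step of a reversal-bounded counter.  `v` is the current value, `dir` is
the current phase (`true` = nondecreasing phase), `rev` the number of reversals
made so far.  The result is the new value/phase/reversal count, or `none` if the
move is impossible (decrementing a zero counter). -/
def ctrStep (v : ℕ) (dir : Bool) (rev : ℕ) : SignType → Option (ℕ × Bool × ℕ)
  | SignType.zero => some (v, dir, rev)
  | SignType.pos => some (v + 1, true, if dir then rev else rev + 1)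
  | SignType.neg => if v = 0 then none else some (v - 1, false, if dir then rev + 1 else rev)

/-! ### NCM : one-way nondeterministic machines with `k` reversal-bounded counters -/

/-- A one-way nondeterministic finite automaton with `k` reversal-bounded
counters.  A transition depends on the state, the input symbol read (`none` = λ),
and the zero/nonzero status of each counter (`true` = nonzero); it yields a new
state and a `-1/0/+1` change for each counter.  In every computation each
counter may make at most `revBound` reversals. -/
structure NCM (α Q : Type) (k : ℕ) where
  q0 : Q
  F : Set Q
  revBound : ℕ
  δ : Q → Option α → (Fin k → Bool) → Set (Q × (Fin k → SignType))

/-- A configuration of a counter machine: state, counter values, and the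
bookkeeping of each counter's phase and number of reversals made so far. -/
structure CConfig (Q : Type) (k : ℕ) where
  st : Q
  ctr : Fin k → ℕ
  dir : Fin k → Bool
  rev : Fin k → ℕ

namespace NCM

variable {α Q : Type} {k : ℕ}

/-- Initial configuration: initial state, all counters zero. -/
def initConfig (M : NCM α Q k) : CConfig Q k :=
  ⟨M.q0, fun _ => 0, fun _ => true, fun _ => 0⟩

/-- One move of an NCM, reading `a` (`none` = λ). -/
def Step (M : NCM α Q k) (a : Option α) (c c' : CConfig Q k) : Prop :=
  ∃ d : Fin k → SignType,
    (c'.st, d) ∈ M.δ c.st a (fun i => decide (c.ctr i ≠ 0)) ∧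
    ∀ i, ctrStep (c.ctr i) (c.dir i) (c.rev i) (d i) = some (c'.ctr i, c'.dir i, c'.rev i)
      ∧ c'.rev i ≤ M.revBound

/-- `Reach M c w c'` : the machine can go from configuration `c` to `c'`
reading exactly the input word `w`. -/
inductive Reach (M : NCM α Q k) : CConfig Q k → List α → CConfig Q k → Prop
  | refl (c) : Reach M c [] c
  | lstep {c c' c'' w} : M.Step none c c' → Reach M c' w c'' → Reach M c w c''
  | rstep {c c' c'' a w} : M.Step (some a) c c' → Reach M c' w c'' → Reach M c (a :: w) c''

/-- The language accepted by an NCM (acceptance by final state after reading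
the entire input). -/
def lang (M : NCM α Q k) : Set (List α) :=
  { w | ∃ c, M.Reach M.initConfig w c ∧ c.st ∈ M.F }

/-- Determinism of a counter machine: at most one move for each state, input
symbol (or λ) and tuple of counter statuses, and λ-moves do not conflict with
reading moves. -/
def Deterministic (M : NCM α Q k) : Prop :=
  (∀ q a s, ∀ t₁ ∈ M.δ q a s, ∀ t₂ ∈ M.δ q a s, t₁ = t₂) ∧
  (∀ q s, (M.δ q none s).Nonempty → ∀ a, M.δ q (some a) s = ∅)

end NCM

/-- `L ∈ 𝓛(NCM)` : `L` is accepted by some NCM with finitely many states. -/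
def IsNCMLang {α : Type} (L : Set (List α)) : Prop :=
  ∃ (Q : Type) (_ : Fintype Q) (k : ℕ) (M : NCM α Q k), M.lang = L

/-- `L ∈ 𝓛(DCM)` : `L` is accepted by some deterministic NCM with finitely
many states. -/
def IsDCMLang {α : Type} (L : Set (List α)) : Prop :=
  ∃ (Q : Type) (_ : Fintype Q) (k : ℕ) (M : NCM α Q k), M.Deterministic ∧ M.lang = L

/-- Left quotient of a language by a single word: `w⁻¹L = { y : w ++ y ∈ L }`. -/
def leftQuot {α : Type} (w : List α) (L : Set (List α)) : Set (List α) :=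
  { y | w ++ y ∈ L }

/-! ### NPCM : NCMs augmented with a pushdown (and possibly `flipBound` flips) -/

/-- An NPCM with `k` reversal-bounded counters (and, when `flipBound = r > 0`,
an `r`-flip NPCM).  A transition reads the state, the input symbol (or λ), the
top stack symbol and the counter statuses, and yields a new state, an action on
the pushdown (`some w` : replace the top symbol by the word `w`, written with
its first symbol the new top; `none` : flip the pushdown above `Z0`) and
counter changes.  The bottom marker `Z0` is never popped or overwritten and
never occurs elsewhere in the stack.  A plain NPCM is one with `flipBound = 0`;
an NPDA is an NPCM with `k = 0`. -/
structure NPCM (α Γ Q : Type) (k : ℕ) where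
  q0 : Q
  Z0 : Γ
  F : Set Q
  revBound : ℕ
  flipBound : ℕ
  δ : Q → Option α → Γ → (Fin k → Bool) → Set (Q × Option (List Γ) × (Fin k → SignType))
  finδ : ∀ q a X s, (δ q a X s).Finite
  z0_bottom : ∀ q a s p w d, (p, some w, d) ∈ δ q a Z0 s → ∃ u, w = u ++ [Z0] ∧ Z0 ∉ u
  z0_inner : ∀ q a X s p w d, X ≠ Z0 → (p, some w, d) ∈ δ q a X s → Z0 ∉ w

/-- A configuration of an NPCM: state, stack contents (top of stack first, so
the last entry is `Z0`), counter values, reversal bookkeeping, and the number of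
flips performed so far. -/
structure PConfig (Γ Q : Type) (k : ℕ) where
  st : Q
  stk : List Γ
  ctr : Fin k → ℕ
  dir : Fin k → Bool
  rev : Fin k → ℕ
  flips : ℕ

/-- The alphabet over which store-configuration strings of an NPCM are written:
states, stack symbols, and one distinct unary symbol `cᵢ` for each counter. -/
abbrev StoreSym (Γ Q : Type) (k : ℕ) := Q ⊕ Γ ⊕ Fin k

/-- The store-configuration string `q γ c₁^{i₁} ⋯ c_k^{i_k}` of a configuration:
the state, then the stack contents written bottom-up (so starting with `Z0`),
then the counter values in unary. -/
def confStr {Γ Q : Type} {k : ℕ} (c : PConfig Γ Q k) : List (StoreSym Γ Q k) :=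
  Sum.inl c.st :: (c.stk.reverse.map (fun X => Sum.inr (Sum.inl X)) ++
    (List.finRange k).flatMap (fun i => List.replicate (c.ctr i) (Sum.inr (Sum.inr i))))

namespace NPCM

variable {α Γ Q : Type} {k : ℕ}

/-- Initial configuration: initial state, stack `Z0`, all counters zero. -/
def initConfig (M : NPCM α Γ Q k) : PConfig Γ Q k :=
  ⟨M.q0, [M.Z0], fun _ => 0, fun _ => true, fun _ => 0, 0⟩

/-- One move of an NPCM, reading `a` (`none` = λ). -/
def Step (M : NPCM α Γ Q k) (a : Option α) (c c' : PConfig Γ Q k) : Prop :=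
  ∃ X rest act d, c.stk = X :: rest ∧
    (c'.st, act, d) ∈ M.δ c.st a X (fun i => decide (c.ctr i ≠ 0)) ∧
    (∀ i, ctrStep (c.ctr i) (c.dir i) (c.rev i) (d i) = some (c'.ctr i, c'.dir i, c'.rev i)
      ∧ c'.rev i ≤ M.revBound) ∧
    c'.flips ≤ M.flipBound ∧
    (match act with
     | some w => c'.stk = w ++ rest ∧ c'.flips = c.flips
     | none => (∃ u, c.stk = u ++ [M.Z0] ∧ c'.stk = u.reverse ++ [M.Z0]) ∧
         c'.flips = c.flips + 1)

/-- `Reach M c w c'` : the machine can go from configuration `c` to `c'`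
reading exactly the input word `w`. -/
inductive Reach (M : NPCM α Γ Q k) : PConfig Γ Q k → List α → PConfig Γ Q k → Prop
  | refl (c) : Reach M c [] c
  | lstep {c c' c'' w} : M.Step none c c' → Reach M c' w c'' → Reach M c w c''
  | rstep {c c' c'' a w} : M.Step (some a) c c' → Reach M c' w c'' → Reach M c (a :: w) c''

/-- `c ⇒* c'` : `c'` is reachable from `c` on some input. -/
def reachesFrom (M : NPCM α Γ Q k) (c c' : PConfig Γ Q k) : Prop :=
  ∃ w, M.Reach c w c'

/-- `c` is reachable from the initial configuration. -/
def InitReach (M : NPCM α Γ Q k) (c : PConfig Γ Q k) : Prop :=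
  M.reachesFrom M.initConfig c

/-- From `c` some accepting configuration is reachable. -/
def CoAcc (M : NPCM α Γ Q k) (c : PConfig Γ Q k) : Prop :=
  ∃ c', M.reachesFrom c c' ∧ c'.st ∈ M.F

/-- The language accepted by an NPCM. -/
def lang (M : NPCM α Γ Q k) : Set (List α) :=
  { w | ∃ c, M.Reach M.initConfig w c ∧ c.st ∈ M.F }

/-- The store language `S(M)` : all store-configuration strings occurring in
some accepting computation. -/
def storeLang (M : NPCM α Γ Q k) : Set (List (StoreSym Γ Q k)) :=
  { x | ∃ c, M.InitReach c ∧ M.CoAcc c ∧ confStr c = x }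

/-- `acc_M(q)` : store configurations with state `q` reachable from the initial
configuration. -/
def accSet (M : NPCM α Γ Q k) (q : Q) : Set (List (StoreSym Γ Q k)) :=
  { x | ∃ c, M.InitReach c ∧ c.st = q ∧ confStr c = x }

/-- `coacc_M(q)` : store configurations with state `q` from which an accepting
configuration is reachable. -/
def coaccSet (M : NPCM α Γ Q k) (q : Q) : Set (List (StoreSym Γ Q k)) :=
  { x | ∃ c, M.CoAcc c ∧ c.st = q ∧ confStr c = x }

/-- `acc_{q,l}(M)` : store configurations with state `q` reachable from the
initial configuration using at most `l` flips. -/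
def accFlip (M : NPCM α Γ Q k) (q : Q) (l : ℕ) : Set (List (StoreSym Γ Q k)) :=
  { x | ∃ c, M.InitReach c ∧ c.st = q ∧ c.flips ≤ l ∧ confStr c = x }

/-- `coacc_{q,l}(M)` : store configurations with state `q` from which an
accepting configuration is reachable using at most `l` further flips. -/
def coaccFlip (M : NPCM α Γ Q k) (q : Q) (l : ℕ) : Set (List (StoreSym Γ Q k)) :=
  { x | ∃ c c', M.reachesFrom c c' ∧ c'.st ∈ M.F ∧ c'.flips ≤ c.flips + l ∧
      c.st = q ∧ confStr c = x }

/-- `pre*_M(C)` : store configurations from which some member of `C` is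
reachable. -/
def PreStar (M : NPCM α Γ Q k) (C : Set (List (StoreSym Γ Q k))) :
    Set (List (StoreSym Γ Q k)) :=
  { x | ∃ c c', confStr c = x ∧ M.reachesFrom c c' ∧ confStr c' ∈ C }

/-- `post*_M(C)` : store configurations reachable from some member of `C`. -/
def PostStar (M : NPCM α Γ Q k) (C : Set (List (StoreSym Γ Q k))) :
    Set (List (StoreSym Γ Q k)) :=
  { y | ∃ c c', confStr c ∈ C ∧ M.reachesFrom c c' ∧ confStr c' = y }

/-- The normal form of Lemma 1:
1. all counters are 1-reversal-bounded in every computation;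
2. the states used before and after each counter reversal are disjoint;
3. from the initial state `q0` all counters immediately increase while keeping
   `Z0` on the pushdown, moving to a new state `q0'`;
4. the machine accepts only in a unique final state with all counters zero and
   the pushdown containing only `Z0`;
5. every pushdown transition pops the top symbol, replaces the top symbol by a
   single symbol, or pushes one new symbol on top of the unchanged old one. -/
def NormalForm (M : NPCM α Γ Q k) : Prop :=
  (∀ c, M.InitReach c → ∀ i, c.rev i ≤ 1) ∧
  (∀ (i : Fin k) c c', M.InitReach c → M.InitReach c' →
      c.rev i = 0 → 1 ≤ c'.rev i → c.st ≠ c'.st) ∧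
  (∃ q0' : Q, q0' ≠ M.q0 ∧ ∀ a s p act d,
      (p, act, d) ∈ M.δ M.q0 a M.Z0 s →
        p = q0' ∧ act = some [M.Z0] ∧ ∀ i, d i = SignType.pos) ∧
  (∃ f : Q, M.F = {f} ∧ ∀ c, M.InitReach c → c.st ∈ M.F →
      c.stk = [M.Z0] ∧ ∀ i, c.ctr i = 0) ∧
  (∀ q a X s p w d, (p, some w, d) ∈ M.δ q a X s →
      w = [] ∨ (∃ Y, w = [Y]) ∨ (∃ Y, w = [Y, X]))

/-- `T_a(M)` : pairs of store configurations `(c₁, c₂)` such that `c₂` is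
reachable from `c₁` in some accepting computation. -/
def TaSet (M : NPCM α Γ Q k) :
    Set (List (StoreSym Γ Q k) × List (StoreSym Γ Q k)) :=
  { p | ∃ c₁ c₂, M.InitReach c₁ ∧ M.reachesFrom c₁ c₂ ∧ M.CoAcc c₂ ∧
      confStr c₁ = p.1 ∧ confStr c₂ = p.2 }

/-- `T_a^R(M)` : like `T_a(M)` but with the second configuration reversed. -/
def TaRSet (M : NPCM α Γ Q k) :
    Set (List (StoreSym Γ Q k) × List (StoreSym Γ Q k)) :=
  { p | ∃ c₁ c₂, M.InitReach c₁ ∧ M.reachesFrom c₁ c₂ ∧ M.CoAcc c₂ ∧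
      confStr c₁ = p.1 ∧ (confStr c₂).reverse = p.2 }

/-- `PAIR(M) = { c₁ # c₂ : (c₁, c₂) ∈ T_a(M) }`, with the marker `#` encoded as
`none` over the extended alphabet `Option (StoreSym Γ Q k)`. -/
def PAIRSet (M : NPCM α Γ Q k) : Set (List (Option (StoreSym Γ Q k))) :=
  { z | ∃ c₁ c₂, M.InitReach c₁ ∧ M.reachesFrom c₁ c₂ ∧ M.CoAcc c₂ ∧
      z = (confStr c₁).map some ++ none :: (confStr c₂).map some }

/-- `PAIR^R(M) = { c₁ # c₂^R : (c₁, c₂) ∈ T_a(M) }`. -/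
def PAIRRSet (M : NPCM α Γ Q k) : Set (List (Option (StoreSym Γ Q k))) :=
  { z | ∃ c₁ c₂, M.InitReach c₁ ∧ M.reachesFrom c₁ c₂ ∧ M.CoAcc c₂ ∧
      z = (confStr c₁).map some ++ none :: ((confStr c₂).map some).reverse }

end NPCM

/-! ### NCACM : one unrestricted counter plus `k` reversal-bounded counters -/

/-- A one-way nondeterministic machine with one unrestricted counter and `k`
reversal-bounded counters.  A transition reads the state, the input symbol (or
λ), the zero/nonzero status of the unrestricted counter and of each
reversal-bounded counter. -/
structure NCACM (α Q : Type) (k : ℕ) where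
  q0 : Q
  F : Set Q
  revBound : ℕ
  δ : Q → Option α → Bool → (Fin k → Bool) → Set (Q × SignType × (Fin k → SignType))

/-- A configuration of an NCACM: state, unrestricted counter value `cv`,
reversal-bounded counter values with bookkeeping. -/
structure AConfig (Q : Type) (k : ℕ) where
  st : Q
  cv : ℕ
  ctr : Fin k → ℕ
  dir : Fin k → Bool
  rev : Fin k → ℕ

namespace NCACM

variable {α Q : Type} {k : ℕ}

def initConfig (M : NCACM α Q k) : AConfig Q k :=
  ⟨M.q0, 0, fun _ => 0, fun _ => true, fun _ => 0⟩

def Step (M : NCACM α Q k) (a : Option α) (c c' : AConfig Q k) : Prop :=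
  ∃ e d, (c'.st, e, d) ∈ M.δ c.st a (decide (c.cv ≠ 0)) (fun i => decide (c.ctr i ≠ 0)) ∧
    ((e = SignType.neg ∧ c.cv ≠ 0 ∧ c'.cv = c.cv - 1) ∨
     (e = SignType.zero ∧ c'.cv = c.cv) ∨
     (e = SignType.pos ∧ c'.cv = c.cv + 1)) ∧
    ∀ i, ctrStep (c.ctr i) (c.dir i) (c.rev i) (d i) = some (c'.ctr i, c'.dir i, c'.rev i)
      ∧ c'.rev i ≤ M.revBound

inductive Reach (M : NCACM α Q k) : AConfig Q k → List α → AConfig Q k → Prop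
  | refl (c) : Reach M c [] c
  | lstep {c c' c'' w} : M.Step none c c' → Reach M c' w c'' → Reach M c w c''
  | rstep {c c' c'' a w} : M.Step (some a) c c' → Reach M c' w c'' → Reach M c (a :: w) c''

def reachesFrom (M : NCACM α Q k) (c c' : AConfig Q k) : Prop :=
  ∃ w, M.Reach c w c'

def InitReach (M : NCACM α Q k) (c : AConfig Q k) : Prop :=
  M.reachesFrom M.initConfig c

def CoAcc (M : NCACM α Q k) (c : AConfig Q k) : Prop :=
  ∃ c', M.reachesFrom c c' ∧ c'.st ∈ M.F

/-- The store-configuration string of an NCACM configuration: the state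
followed by the counter values in unary over distinct symbols (`Sum.inr 0` for
the unrestricted counter, `Sum.inr i.succ` for the `i`-th reversal-bounded
counter). -/
def confStr (c : AConfig Q k) : List (Q ⊕ Fin (k + 1)) :=
  Sum.inl c.st :: (List.replicate c.cv (Sum.inr 0) ++
    (List.finRange k).flatMap (fun i => List.replicate (c.ctr i) (Sum.inr i.succ)))

/-- The store language of an NCACM. -/
def storeLang (M : NCACM α Q k) : Set (List (Q ⊕ Fin (k + 1))) :=
  { x | ∃ c, M.InitReach c ∧ M.CoAcc c ∧ confStr c = x }

def PreStar (M : NCACM α Q k) (C : Set (List (Q ⊕ Fin (k + 1)))) :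
    Set (List (Q ⊕ Fin (k + 1))) :=
  { x | ∃ c c', confStr c = x ∧ M.reachesFrom c c' ∧ confStr c' ∈ C }

def PostStar (M : NCACM α Q k) (C : Set (List (Q ⊕ Fin (k + 1)))) :
    Set (List (Q ⊕ Fin (k + 1))) :=
  { y | ∃ c c', confStr c ∈ C ∧ M.reachesFrom c c' ∧ confStr c' = y }

end NCACM

/-! ### NSA : one-way nondeterministic stack automata -/

/-- Actions of a stack automaton: push a symbol (only at the top), pop (only at
the top, never popping `Z0`), move the stack head down or up inside the stack
(read-only), or keep the head in place. -/
inductive SAct (Γ : Type) where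
  | push : Γ → SAct Γ
  | pop : SAct Γ
  | up : SAct Γ
  | down : SAct Γ
  | stay : SAct Γ

/-- A one-way nondeterministic stack automaton.  A transition depends on the
state, the input symbol read (or λ), the stack symbol scanned by the stack
head, and whether the head is at the top of the stack. -/
structure NSA (α Γ Q : Type) where
  q0 : Q
  Z0 : Γ
  F : Set Q
  δ : Q → Option α → Γ → Bool → Set (Q × SAct Γ)

/-- A configuration of an NSA: state, stack contents (bottom first, so starting
with `Z0`), and the position of the stack head (`0` = bottom). -/
structure SConfig (Γ Q : Type) where
  st : Q
  stk : List Γ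
  pos : ℕ

namespace NSA

variable {α Γ Q : Type}

def initConfig (M : NSA α Γ Q) : SConfig Γ Q := ⟨M.q0, [M.Z0], 0⟩

def Step (M : NSA α Γ Q) (a : Option α) (c c' : SConfig Γ Q) : Prop :=
  ∃ X act, c.stk[c.pos]? = some X ∧
    (c'.st, act) ∈ M.δ c.st a X (decide (c.pos + 1 = c.stk.length)) ∧
    (match act with
     | SAct.push g => c.pos + 1 = c.stk.length ∧ c'.stk = c.stk ++ [g] ∧ c'.pos = c.pos + 1
     | SAct.pop => c.pos + 1 = c.stk.length ∧ X ≠ M.Z0 ∧ c'.stk = c.stk.dropLast ∧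
         c'.pos = c.pos - 1
     | SAct.up => c.pos + 1 < c.stk.length ∧ c'.stk = c.stk ∧ c'.pos = c.pos + 1
     | SAct.down => 0 < c.pos ∧ c'.stk = c.stk ∧ c'.pos = c.pos - 1
     | SAct.stay => c'.stk = c.stk ∧ c'.pos = c.pos)

inductive Reach (M : NSA α Γ Q) : SConfig Γ Q → List α → SConfig Γ Q → Prop
  | refl (c) : Reach M c [] c
  | lstep {c c' c'' w} : M.Step none c c' → Reach M c' w c'' → Reach M c w c''
  | rstep {c c' c'' a w} : M.Step (some a) c c' → Reach M c' w c'' → Reach M c (a :: w) c''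

def reachesFrom (M : NSA α Γ Q) (c c' : SConfig Γ Q) : Prop :=
  ∃ w, M.Reach c w c'

/-- The store-configuration string of an NSA configuration: the state followed
by the stack contents with the position of the stack head marked (the marker
`Sum.inr (Sum.inr ())` is placed immediately before the scanned symbol). -/
def confStr (c : SConfig Γ Q) : List (Q ⊕ Γ ⊕ Unit) :=
  Sum.inl c.st :: ((c.stk.take c.pos).map (fun X => Sum.inr (Sum.inl X)) ++
    Sum.inr (Sum.inr ()) :: (c.stk.drop c.pos).map (fun X => Sum.inr (Sum.inl X)))

def PreStar (M : NSA α Γ Q) (C : Set (List (Q ⊕ Γ ⊕ Unit))) :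
    Set (List (Q ⊕ Γ ⊕ Unit)) :=
  { x | ∃ c c', confStr c = x ∧ M.reachesFrom c c' ∧ confStr c' ∈ C }

def PostStar (M : NSA α Γ Q) (C : Set (List (Q ⊕ Γ ⊕ Unit))) :
    Set (List (Q ⊕ Γ ⊕ Unit)) :=
  { y | ∃ c c', confStr c ∈ C ∧ M.reachesFrom c c' ∧ confStr c' = y }

end NSA

/-! ### 2-tape NCMs -/

/-- A 2-tape NCM is an NCM whose reading moves read one symbol from either the
first tape (`(false, a)`) or the second tape (`(true, a)`): at most one input
head moves right in each step.  `Reach2 M c x y c'` means the machine can go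
from configuration `c` to `c'` consuming `x` on tape 1 and `y` on tape 2. -/
inductive Reach2 {α Q : Type} {k : ℕ} (M : NCM (Bool × α) Q k) :
    CConfig Q k → List α → List α → CConfig Q k → Prop
  | refl (c) : Reach2 M c [] [] c
  | lstep {c c' c'' x y} : M.Step none c c' → Reach2 M c' x y c'' → Reach2 M c x y c''
  | step1 {c c' c'' a x y} : M.Step (some (false, a)) c c' → Reach2 M c' x y c'' →
      Reach2 M c (a :: x) y c''
  | step2 {c c' c'' a x y} : M.Step (some (true, a)) c c' → Reach2 M c' x y c'' →
      Reach2 M c x (a :: y) c''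

/-- `Reach2N M n c x y c'` : same as `Reach2` but counting the number `n` of
transition steps used. -/
inductive Reach2N {α Q : Type} {k : ℕ} (M : NCM (Bool × α) Q k) :
    ℕ → CConfig Q k → List α → List α → CConfig Q k → Prop
  | refl (c) : Reach2N M 0 c [] [] c
  | lstep {n c c' c'' x y} : M.Step none c c' → Reach2N M n c' x y c'' →
      Reach2N M (n + 1) c x y c''
  | step1 {n c c' c'' a x y} : M.Step (some (false, a)) c c' → Reach2N M n c' x y c'' →
      Reach2N M (n + 1) c (a :: x) y c''
  | step2 {n c c' c'' a x y} : M.Step (some (true, a)) c c' → Reach2N M n c' x y c'' →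
      Reach2N M (n + 1) c x (a :: y) c''

/-- The set of pairs of words accepted by a 2-tape NCM. -/
def pairsAccepted {α Q : Type} {k : ℕ} (M : NCM (Bool × α) Q k) :
    Set (List α × List α) :=
  { p | ∃ c, Reach2 M M.initConfig p.1 p.2 c ∧ c.st ∈ M.F }

/-- `T` is accepted by some 2-tape NCM with finitely many states. -/
def IsNCM2Rel {α : Type} (T : Set (List α × List α)) : Prop :=
  ∃ (Q : Type) (_ : Fintype Q) (k : ℕ) (M : NCM (Bool × α) Q k), pairsAccepted M = T

/-! ### Multi-head NFAs -/

/-- An `h`-head NFA: `h` independent one-way read-only heads on a single input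
tape; a move depends on the symbols scanned by the heads (`none` = fallen off
the right end) and advances the heads with `mv i = true` by one cell. -/
structure MHNFA (α Q : Type) (h : ℕ) where
  q0 : Q
  F : Set Q
  δ : Q → (Fin h → Option α) → Set (Q × (Fin h → Bool))

namespace MHNFA

variable {α Q : Type} {h : ℕ}

def Step (M : MHNFA α Q h) (w : List α) (c c' : Q × (Fin h → ℕ)) : Prop :=
  ∃ mv, (c'.1, mv) ∈ M.δ c.1 (fun i => w[c.2 i]?) ∧
    ∀ i, c'.2 i = c.2 i + (if mv i then 1 else 0)

/-- The language of a multi-head NFA: all heads fall off the input in an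
accepting state. -/
def lang (M : MHNFA α Q h) : Set (List α) :=
  { w | ∃ c, Relation.ReflTransGen (M.Step w) (M.q0, fun _ => 0) c ∧
      c.1 ∈ M.F ∧ ∀ i, w.length ≤ c.2 i }

end MHNFA

/-- `L` is accepted by some multi-head NFA with finitely many states. -/
def IsMHNFALang {α : Type} (L : Set (List α)) : Prop :=
  ∃ (Q : Type) (_ : Fintype Q) (h : ℕ) (M : MHNFA α Q h), M.lang = L

/-! ### Generalized sequential machines -/

/-- A generalized sequential machine: a nondeterministic finite automaton which
outputs a word on each transition. -/
structure GSM (α β Q : Type) where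
  q0 : Q
  F : Set Q
  δ : Q → α → Set (Q × List β)
  finδ : ∀ q a, (δ q a).Finite

namespace GSM

variable {α β Q : Type}

/-- `Run g q w v q'` : reading `w` from state `q`, the gsm can output `v` and
end in state `q'`. -/
inductive Run (g : GSM α β Q) : Q → List α → List β → Q → Prop
  | refl (q) : Run g q [] [] q
  | step {q p q' a w out v} : (p, out) ∈ g.δ q a → Run g p w v q' →
      Run g q (a :: w) (out ++ v) q'

/-- The image `g(L)` of a language under a gsm. -/
def image (g : GSM α β Q) (L : Set (List α)) : Set (List β) :=
  { v | ∃ w ∈ L, ∃ qf ∈ g.F, g.Run g.q0 w v qf }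

end GSM

/-! ### Parikh maps, semilinearity, trios -/

/-- The Parikh map of a word. -/
def parikh {β : Type} [DecidableEq β] (w : List β) : β → ℕ := fun b => w.count b

/-- A language is semilinear iff its Parikh map equals the Parikh map of some
regular language. -/
def IsSemilinearLang {β : Type} [DecidableEq β] (L : Set (List β)) : Prop :=
  ∃ R : Set (List β), IsRegularLang R ∧ parikh '' L = parikh '' R

/-- Image of a language under (the extension of) a homomorphism. -/
def homImage {β γ : Type} (h : β → List γ) (L : Set (List β)) : Set (List γ) :=
  { v | ∃ w ∈ L, v = w.flatMap h }

/-- Inverse image of a language under (the extension of) a homomorphism. -/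
def homPreimage {β γ : Type} (h : β → List γ) (L : Set (List γ)) : Set (List β) :=
  { w | w.flatMap h ∈ L }

/-- A family of languages (one class of languages over every alphabet) is a
trio if it is closed under λ-free homomorphism, inverse homomorphism, and
intersection with regular languages. -/
def IsTrio (F : ∀ β : Type, Set (List β) → Prop) : Prop :=
  (∀ (β γ : Type) (h : β → List γ), (∀ b, h b ≠ []) → ∀ L, F β L → F γ (homImage h L)) ∧
  (∀ (β γ : Type) (h : β → List γ) (L : Set (List γ)), F γ L → F β (homPreimage h L)) ∧
  (∀ (β : Type) (L R : Set (List β)), F β L → IsRegularLang R → F β (L ∩ R))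

end StoreFormal


/-!
The machine `M'` simulates `M` and pushes every input symbol it reads, so its pushdown never
pops and always holds `Z0` followed by the input read so far. When `M` accepts, `M'` empties
its counters and enters its final state `f`; the store configurations in state `f` are then
exactly the words `f Z0 w` with `w ∈ L(M)`. Emptying a counter can cost one reversal beyond the
bound of `M`, so `M'` is allowed one more reversal and instead enforces the bound of `M` during
the simulation by keeping the phases of the counters in its finite control.
-/

namespace StoreFormal

def phaseStep : Bool × ℕ → SignType → Bool × ℕ
  | (dir, rev), SignType.zero => (dir, rev)
  | (dir, rev), SignType.pos => (true, if dir then rev else rev + 1)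
  | (dir, rev), SignType.neg => (false, if dir then rev + 1 else rev)

theorem phaseStep_of_ctrStep_eq_some {v v' rev rev' : ℕ} {dir dir' : Bool} {s : SignType}
    (h : ctrStep v dir rev s = some (v', dir', rev')) : phaseStep (dir, rev) s = (dir', rev') := by
  cases s <;> simp only [ctrStep] at h
  case neg =>
    split at h
    · cases h
    · cases h; rfl
  all_goals cases h; rfl

namespace CConfig

variable {Q : Type} {k : ℕ}

def decrement (c : CConfig Q k) (i : Fin k) : CConfig Q k :=
  ⟨c.st, Function.update c.ctr i (c.ctr i - 1), Function.update c.dir i false,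
    Function.update c.rev i (c.rev i + (c.dir i).toNat)⟩

theorem ctrStep_decrement (c : CConfig Q k) {i : Fin k} (hi : c.ctr i ≠ 0) (j : Fin k) :
    ctrStep (c.ctr j) (c.dir j) (c.rev j) ((Pi.single i SignType.neg : Fin k → SignType) j) =
      some ((c.decrement i).ctr j, (c.decrement i).dir j, (c.decrement i).rev j) := by
  by_cases hj : j = i
  · subst hj
    cases hd : c.dir j <;> simp [decrement, ctrStep, hi, hd]
  · simp [decrement, hj]
    rfl

theorem decrement_rev_add_toNat_le {c : CConfig Q k} {B : ℕ}
    (h : ∀ j, c.rev j + (c.dir j).toNat ≤ B) (i j : Fin k) :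
    (c.decrement i).rev j + ((c.decrement i).dir j).toNat ≤ B := by
  by_cases hj : j = i
  · subst hj
    simpa [decrement] using h j
  · simpa [decrement, hj] using h j

theorem sum_ctr_decrement_lt {c : CConfig Q k} {i : Fin k} (hi : c.ctr i ≠ 0) :
    ∑ j, (c.decrement i).ctr j < ∑ j, c.ctr j := by
  refine Finset.sum_lt_sum (fun j _ => ?_) ⟨i, Finset.mem_univ _, ?_⟩
  · by_cases hj : j = i
    · subst hj
      simp [decrement]
    · simp [decrement, hj]
  · simp only [decrement, Function.update_self]
    omega

def withStack {Γ : Type} (c : CConfig Q k) (stk : List Γ) : PConfig Γ Q k :=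
  ⟨c.st, stk, c.ctr, c.dir, c.rev, 0⟩

end CConfig

def PConfig.toCConfig {Γ Q : Type} {k : ℕ} (c : PConfig Γ Q k) : CConfig Q k :=
  ⟨c.st, c.ctr, c.dir, c.rev⟩

variable {Γ Q : Type} {k : ℕ} in
theorem confStr_of_ctr_eq_zero {c : PConfig Γ Q k} (h : ∀ i, c.ctr i = 0) :
    confStr c = Sum.inl c.st :: c.stk.reverse.map (Sum.inr ∘ Sum.inl) := by
  simp [confStr, h, Function.comp_def]

namespace NCM

variable {α Q : Type} {k : ℕ} {M : NCM α Q k}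

theorem Reach.trans {c c' c'' : CConfig Q k} {u v : List α}
    (h : M.Reach c u c') (h' : M.Reach c' v c'') : M.Reach c (u ++ v) c'' := by
  induction h with
  | refl => exact h'
  | lstep s _ ih => exact .lstep s (ih h')
  | rstep s _ ih => exact .rstep s (ih h')

theorem Reach.invariant {P : List α → CConfig Q k → Prop}
    (step : ∀ {w a c c'}, P w c → M.Step a c c' → P (w ++ a.toList) c')
    {c c' : CConfig Q k} {w : List α} (h : M.Reach c w c') {v : List α} (hv : P v c) :
    P (v ++ w) c' := by
  induction h generalizing v with
  | refl => simpa using hv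
  | lstep s _ ih => simpa using ih (by simpa using step hv s)
  | rstep s _ ih => simpa using ih (step hv s)

theorem Step.rev_le {a : Option α} {c c' : CConfig Q k} (h : M.Step a c c') (i : Fin k) :
    c'.rev i ≤ M.revBound :=
  let ⟨_, _, hctr⟩ := h; (hctr i).2

theorem Reach.single {a : Option α} {c c' : CConfig Q k} (h : M.Step a c c') :
    M.Reach c a.toList c' := by
  cases a with
  | none => exact .lstep h (.refl _)
  | some a => exact .rstep h (.refl _)

/-- In a run state `(q, t)`, `t i` records the direction and the number of reversals of
counter `i`; `inr false` empties the counters and `inr true` is the final state. -/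
abbrev DrainState (Q : Type) (k R : ℕ) : Type := (Q × (Fin k → Bool × Fin (R + 1))) ⊕ Bool

inductive DrainMove (M : NCM α Q k) (s : Fin k → Bool) :
    DrainState Q k M.revBound → Option α →
      DrainState Q k M.revBound × (Fin k → SignType) → Prop
  | run {q p a d t t'} : (p, d) ∈ M.δ q a s →
      (∀ i, phaseStep ((t i).1, (t i).2) (d i) = ((t' i).1, (t' i).2)) →
      DrainMove M s (.inl (q, t)) a (.inl (p, t'), d)
  | accept {q t} : q ∈ M.F → DrainMove M s (.inl (q, t)) none (.inr false, 0)
  | drain (i : Fin k) : s i = true →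
      DrainMove M s (.inr false) none (.inr false, Pi.single i SignType.neg)
  | finish : (∀ i, s i = false) → DrainMove M s (.inr false) none (.inr true, 0)

def drainCounters (M : NCM α Q k) : NCM α (DrainState Q k M.revBound) k where
  q0 := .inl (M.q0, fun _ => (true, 0))
  F := {.inr true}
  revBound := M.revBound + 1
  δ q a s := {r | DrainMove M s q a r}

def Tracks {R : ℕ} (t : Fin k → Bool × Fin (R + 1)) (c : CConfig Q k) : Prop :=
  ∀ i, ((t i).1, ((t i).2 : ℕ)) = (c.dir i, c.rev i)

def runConfig (c : CConfig Q k) {R : ℕ} (t : Fin k → Bool × Fin (R + 1)) :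
    CConfig (DrainState Q k R) k :=
  ⟨.inl (c.st, t), c.ctr, c.dir, c.rev⟩

def DrainInv (M : NCM α Q k) (w : List α) (c : CConfig (DrainState Q k M.revBound) k) : Prop :=
  match c.st with
  | .inl (q, t) => Tracks t c ∧ M.Reach M.initConfig w ⟨q, c.ctr, c.dir, c.rev⟩
  | .inr false => w ∈ M.lang
  | .inr true => w ∈ M.lang ∧ ∀ i, c.ctr i = 0

theorem DrainInv.step {w : List α} {a : Option α} {c c' : CConfig (DrainState Q k M.revBound) k}
    (hc : DrainInv M w c) (h : M.drainCounters.Step a c c') : DrainInv M (w ++ a.toList) c' := by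
  obtain ⟨st, ctr, dir, rev⟩ := c
  obtain ⟨st', ctr', dir', rev'⟩ := c'
  obtain ⟨d, hmove, hctr⟩ := h
  change DrainMove M _ st a (st', d) at hmove
  cases hmove with
  | @run q p _ _ t t' hδ hphase =>
    obtain ⟨htr, hreach⟩ := hc
    have htr' : Tracks t' ⟨_, ctr', dir', rev'⟩ := fun i => by
      have := hphase i
      rw [htr i, phaseStep_of_ctrStep_eq_some (hctr i).1] at this
      exact this.symm
    have hstep : M.Step a ⟨q, ctr, dir, rev⟩ ⟨p, ctr', dir', rev'⟩ :=
      ⟨d, hδ, fun i => ⟨(hctr i).1, (Prod.mk.inj (htr' i)).2 ▸ Fin.is_le _⟩⟩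
    exact ⟨htr', hreach.trans (.single hstep)⟩
  | accept hF => rw [Option.toList_none, List.append_nil]; exact ⟨_, hc.2, hF⟩
  | drain i _ => rw [Option.toList_none, List.append_nil]; exact hc
  | finish hzero =>
    rw [Option.toList_none, List.append_nil]
    refine ⟨hc, fun i => ?_⟩
    have := (hctr i).1
    simp_all [ctrStep]

theorem drainCounters_sound {w : List α} {c : CConfig (DrainState Q k M.revBound) k}
    (h : M.drainCounters.Reach M.drainCounters.initConfig w c) (hst : c.st = .inr true) :
    w ∈ M.lang ∧ ∀ i, c.ctr i = 0 := by
  have hinit : DrainInv M [] M.drainCounters.initConfig := ⟨fun _ => rfl, .refl _⟩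
  have := h.invariant DrainInv.step hinit
  simpa only [DrainInv, hst, List.nil_append] using this

def phasesOf (c : CConfig Q k) {R : ℕ} (h : ∀ i, c.rev i ≤ R) :
    Fin k → Bool × Fin (R + 1) :=
  fun i => (c.dir i, ⟨c.rev i, Nat.lt_succ_of_le (h i)⟩)

theorem drainCounters_step_run {a : Option α} {c c' : CConfig Q k} (h : M.Step a c c')
    {t : Fin k → Bool × Fin (M.revBound + 1)} (ht : Tracks t c) :
    M.drainCounters.Step a (runConfig c t) (runConfig c' (phasesOf c' h.rev_le)) := by
  obtain ⟨d, hδ, hctr⟩ := h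
  refine ⟨d, DrainMove.run hδ fun i => ?_,
    fun i => ⟨(hctr i).1, Nat.le_succ_of_le (hctr i).2⟩⟩
  rw [ht i]
  exact phaseStep_of_ctrStep_eq_some (hctr i).1

theorem drainCounters_reach_run {w : List α} {c c' : CConfig Q k} (h : M.Reach c w c')
    {t : Fin k → Bool × Fin (M.revBound + 1)} (ht : Tracks t c) :
    ∃ t', Tracks t' c' ∧ M.drainCounters.Reach (runConfig c t) w (runConfig c' t') := by
  induction h generalizing t with
  | refl => exact ⟨t, ht, .refl _⟩
  | lstep s _ ih =>
    obtain ⟨t', ht', h⟩ := ih (t := phasesOf _ s.rev_le) fun _ => rfl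
    exact ⟨t', ht', .lstep (drainCounters_step_run s ht) h⟩
  | rstep s _ ih =>
    obtain ⟨t', ht', h⟩ := ih (t := phasesOf _ s.rev_le) fun _ => rfl
    exact ⟨t', ht', .rstep (drainCounters_step_run s ht) h⟩

theorem drainCounters_reach_done (c : CConfig (DrainState Q k M.revBound) k)
    (hst : c.st = .inr false) (hrev : ∀ i, c.rev i + (c.dir i).toNat ≤ M.revBound + 1) :
    ∃ c', M.drainCounters.Reach c [] c' ∧ c'.st = .inr true ∧ ∀ i, c'.ctr i = 0 := by
  by_cases hzero : ∀ i, c.ctr i = 0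
  · have hfinish : M.drainCounters.Step none c ⟨.inr true, c.ctr, c.dir, c.rev⟩ := by
      refine ⟨0, ?_, fun i => ⟨rfl, ?_⟩⟩
      · change DrainMove M _ c.st none (.inr true, 0)
        rw [hst]
        exact .finish (by simpa using hzero)
      · have := hrev i
        change c.rev i ≤ M.revBound + 1
        omega
    exact ⟨_, .lstep hfinish (.refl _), rfl, hzero⟩
  · obtain ⟨i, hi⟩ := not_forall.mp hzero
    have hdecr : M.drainCounters.Step none c (c.decrement i) := by
      refine ⟨Pi.single i SignType.neg, ?_, fun j => ⟨c.ctrStep_decrement hi j, ?_⟩⟩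
      · change DrainMove M _ c.st none (c.st, _)
        rw [hst]
        exact .drain i (by simpa using hi)
      · have := CConfig.decrement_rev_add_toNat_le hrev i j
        change _ ≤ M.revBound + 1
        omega
    obtain ⟨c', h, hst', hzero'⟩ :=
      drainCounters_reach_done (c.decrement i) hst (CConfig.decrement_rev_add_toNat_le hrev i)
    exact ⟨c', .lstep hdecr h, hst', hzero'⟩
termination_by ∑ i, c.ctr i
decreasing_by exact CConfig.sum_ctr_decrement_lt hi

theorem drainCounters_complete {w : List α} (hw : w ∈ M.lang) :
    ∃ c, M.drainCounters.Reach M.drainCounters.initConfig w c ∧ c.st = .inr true ∧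
      ∀ i, c.ctr i = 0 := by
  obtain ⟨cf, hreach, hF⟩ := hw
  obtain ⟨t, ht, hrun⟩ := drainCounters_reach_run hreach (t := fun _ => (true, 0)) fun _ => rfl
  have hrev : ∀ i, cf.rev i ≤ M.revBound := fun i => (Prod.mk.inj (ht i)).2 ▸ Fin.is_le _
  have haccept :
      M.drainCounters.Step none (runConfig cf t) ⟨.inr false, cf.ctr, cf.dir, cf.rev⟩ :=
    ⟨0, .accept hF, fun i => ⟨rfl, Nat.le_succ_of_le (hrev i)⟩⟩
  obtain ⟨c, hdrain, hst, hzero⟩ :=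
    drainCounters_reach_done (M := M) ⟨.inr false, cf.ctr, cf.dir, cf.rev⟩ rfl fun i => by
      have := hrev i
      cases cf.dir i <;> simp <;> omega
  have hreach' : M.drainCounters.Reach M.drainCounters.initConfig (w ++ []) c :=
    hrun.trans (.lstep haccept hdrain)
  exact ⟨c, by simpa using hreach', hst, hzero⟩

def recorder [Finite Q] (N : NCM α Q k) : NPCM α (Option α) Q k where
  q0 := N.q0
  Z0 := none
  F := N.F
  revBound := N.revBound
  flipBound := 0
  δ q a X s := (fun r => (r.1, some (a.toList.map some ++ [X]), r.2)) '' N.δ q a s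
  finδ _ _ _ _ := (Set.toFinite _).image _
  z0_bottom := by
    rintro q a s p w d ⟨r, -, ⟨⟩⟩
    exact ⟨_, rfl, by simp⟩
  z0_inner := by
    rintro q a X s p w d hX ⟨r, -, ⟨⟩⟩
    simp [Ne.symm hX]

section Recorder

variable [Finite Q] {N : NCM α Q k}

theorem recorder_step_iff {a : Option α} {c c' : PConfig (Option α) Q k} :
    N.recorder.Step a c c' ↔ c.stk ≠ [] ∧ N.Step a c.toCConfig c'.toCConfig ∧
      c'.stk = a.toList.map some ++ c.stk ∧ c.flips = 0 ∧ c'.flips = 0 := by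
  constructor
  · rintro ⟨X, rest, _, d, hstk, ⟨⟨p, d⟩, hδ, ⟨⟩⟩, hctr, hflips, hstk', hflips'⟩
    refine ⟨by simp [hstk], ⟨d, hδ, hctr⟩, by simp [hstk, hstk'], ?_, ?_⟩
    all_goals change c'.flips ≤ 0 at hflips; omega
  · rintro ⟨hne, ⟨d, hδ, hctr⟩, hstk', hflips, hflips'⟩
    obtain ⟨X, rest, hstk⟩ := List.exists_cons_of_ne_nil hne
    exact ⟨X, rest, _, d, hstk, ⟨_, hδ, rfl⟩, hctr, hflips'.le, by simp [hstk, hstk'],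
      hflips'.trans hflips.symm⟩

theorem reach_of_recorder_reach {c c' : PConfig (Option α) Q k} {w : List α}
    (h : N.recorder.Reach c w c') :
    N.Reach c.toCConfig w c'.toCConfig ∧ c'.stk = (w.map some).reverse ++ c.stk := by
  induction h with
  | refl => exact ⟨.refl _, by simp⟩
  | lstep s _ ih =>
    obtain ⟨-, hs, hstk, -⟩ := recorder_step_iff.mp s
    exact ⟨.lstep hs ih.1, by simp [ih.2, hstk]⟩
  | rstep s _ ih =>
    obtain ⟨-, hs, hstk, -⟩ := recorder_step_iff.mp s
    exact ⟨.rstep hs ih.1, by simp [ih.2, hstk]⟩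

theorem Reach.recorder {c c' : CConfig Q k} {w : List α} (h : N.Reach c w c')
    {stk : List (Option α)} (hstk : stk ≠ []) :
    N.recorder.Reach (c.withStack stk) w (c'.withStack ((w.map some).reverse ++ stk)) := by
  induction h generalizing stk with
  | refl => simpa using .refl _
  | @lstep _ c₁ _ _ s _ ih =>
    exact .lstep (c' := c₁.withStack stk)
      (recorder_step_iff.mpr ⟨hstk, s, rfl, rfl, rfl⟩) (ih hstk)
  | @rstep _ c₁ _ a _ s _ ih =>
    exact .rstep (c' := c₁.withStack (some a :: stk))
      (recorder_step_iff.mpr ⟨hstk, s, rfl, rfl, rfl⟩)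
      (by simpa using ih (List.cons_ne_nil _ _))

end Recorder

end NCM

end StoreFormal

open StoreFormal NCM in
theorem stmt_4_general (α Q : Type) [Fintype Q] (k : ℕ) (M : NCM α Q k) :
    ∃ (Q' : Type) (_ : Fintype Q') (k' : ℕ) (M' : NPCM α (Option α) Q' k') (f : Q'),
      M'.flipBound = 0 ∧ M'.Z0 = none ∧
      (∀ q a X s p w d, (p, some w, d) ∈ M'.δ q a X s → ∃ u, w = u ++ [X]) ∧
      leftQuot [Sum.inl f, Sum.inr (Sum.inl M'.Z0)] M'.storeLang =
        (fun w : List α => w.map (fun a => (Sum.inr (Sum.inl (some a)) :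
            StoreSym (Option α) Q' k'))) '' M.lang := by
  refine ⟨_, inferInstance, k, M.drainCounters.recorder, .inr true, rfl, rfl, ?_, ?_⟩
  · rintro q a X s p w d ⟨r, -, ⟨⟩⟩
    exact ⟨_, rfl⟩
  ext y
  simp only [leftQuot, NPCM.storeLang, Set.mem_ofPred_eq, Set.mem_image]
  constructor
  · rintro ⟨c, ⟨w, hreach⟩, -, hconf⟩
    obtain ⟨hN, hstk⟩ := reach_of_recorder_reach hreach
    have hst : c.st = .inr true := by simpa [confStr] using congrArg List.head? hconf
    obtain ⟨hw, hzero⟩ := drainCounters_sound hN hst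
    rw [confStr_of_ctr_eq_zero hzero, hstk] at hconf
    simp [recorder, NPCM.initConfig, Function.comp_def] at hconf
    exact ⟨w, hw, hconf.2⟩
  · rintro ⟨w, hw, rfl⟩
    obtain ⟨c, hreach, hst, hzero⟩ := drainCounters_complete hw
    refine ⟨c.withStack ((w.map some).reverse ++ [none]), ⟨w, hreach.recorder (by simp)⟩,
      ⟨_, ⟨[], .refl _⟩, hst⟩, ?_⟩
    rw [confStr_of_ctr_eq_zero hzero]
    simp [CConfig.withStack, hst, recorder]

open StoreFormal in
/-- for every NCM `M` there are an NPCM `M'` whose pushdown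
makes zero reversals (it never pops) and a fixed word `f Z0` (a state of `M'`
followed by the bottom-of-stack marker) with `(f Z0)⁻¹ S(M') = L(M)` (with the
input alphabet embedded into the stack alphabet of `M'`). -/
theorem stmt_4 (α Q : Type) [Fintype α] [Fintype Q] (k : ℕ) (M : NCM α Q k) :
    ∃ (Q' : Type) (_ : Fintype Q') (k' : ℕ) (M' : NPCM α (Option α) Q' k') (f : Q'),
      M'.flipBound = 0 ∧ M'.Z0 = none ∧
      (∀ q a X s p w d, (p, some w, d) ∈ M'.δ q a X s → ∃ u, w = u ++ [X]) ∧
      leftQuot [Sum.inl f, Sum.inr (Sum.inl M'.Z0)] M'.storeLang =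
        (fun w : List α => w.map (fun a => (Sum.inr (Sum.inl (some a)) :
            StoreSym (Option α) Q' k'))) '' M.lang :=
  stmt_4_general α Q k M
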